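/- The map ρ_s on the universal cover of Sp(2,ℝ) is a quasimorphism with defect at most 1: |ρ_s(ΨΦ) − ρ_s(Ψ) − ρ_s(Φ)| ≤ 1 for all Ψ, Φ and all unit vectors s. -/

import Mathlib

/-- Rotation by angle `x` as a `2 × 2` matrix. -/
noncomputable def rotMat (x : ℝ) : Matrix (Fin 2) (Fin 2) ℝ :=
  !![Real.cos x, -Real.sin x; Real.sin x, Real.cos x]

/-- Euclidean norm of a vector in `ℝ²`. -/
noncomputable def vnorm (v : Fin 2 → ℝ) : ℝ := Real.sqrt (v 0 ^ 2 + v 1 ^ 2)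

/-- A path in `Sp(2,ℝ) = SL(2,ℝ)` starting at the identity, representing an element of
the universal cover of `Sp(2,ℝ)`. -/
def IsSpPath (Φ : ℝ → Matrix (Fin 2) (Fin 2) ℝ) : Prop :=
  ContinuousOn Φ (Set.Icc 0 1) ∧ Φ 0 = 1 ∧ ∀ t ∈ Set.Icc (0:ℝ) 1, (Φ t).det = 1

/-- `θ` is the lift, via the covering `ℝ → S¹`, `θ ↦ e^{2πiθ}·s`, of the circle-valued map
`t ↦ Φ(t)s/|Φ(t)s|`, normalized by `θ(0) = 0`.  In particular `θ(1) = ρ_s(Φ)` is the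
rotation number of `Φ` relative to the unit vector `s`. -/
def IsRotLift (Φ : ℝ → Matrix (Fin 2) (Fin 2) ℝ) (s : Fin 2 → ℝ) (θ : ℝ → ℝ) : Prop :=
  ContinuousOn θ (Set.Icc 0 1) ∧ θ 0 = 0 ∧ ∀ t ∈ Set.Icc (0:ℝ) 1,
    (Φ t).mulVec s = vnorm ((Φ t).mulVec s) • (rotMat (2 * Real.pi * θ t)).mulVec s

/-!
Put `g u = θP ((u + 1) / 2) - θΨ u`, the angle in turns from `Ψ u s` to `Ψ u (Φ 1 s)`, so that
`g 1 = θP 1 - θΨ 1` and `g 0 = θΦ 1`, the latter because on `[0, 1/2]` the lifts `θP` and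
`θΦ (2 ·)` of the same direction differ by a continuous integer-valued function. As
`det (Ψ u) = 1`, the cross product of these two vectors is `cross s (Φ 1 s)` for every `u`;
hence `sin (2π g)` either vanishes identically on `[0, 1]`, and then the continuous function `2g`
is integer valued and constant, or never vanishes, and then `2g` stays between two consecutive
integers. Either way `|g 1 - g 0| < 1/2`.
-/

open Real Set Matrix

theorem IsPreconnected.eq_of_forall_mem_range_intCast {α : Type*} [TopologicalSpace α]
    {S : Set α} (hS : IsPreconnected S) {f : α → ℝ} (hf : ContinuousOn f S)
    (hint : ∀ t ∈ S, ∃ n : ℤ, f t = n) {x y : α} (hx : x ∈ S) (hy : y ∈ S) : f y = f x :=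
  hS.constant_of_mapsTo Int.isClosedEmbedding_coe_real.isInducing.isDiscrete_range hf
    (fun t ht => (hint t ht).imp fun _ h => h.symm) hy hx

theorem IsPreconnected.abs_sub_lt_one_of_forall_ne_intCast {α : Type*} [TopologicalSpace α]
    {S : Set α} (hS : IsPreconnected S) {f : α → ℝ} (hf : ContinuousOn f S)
    (hint : ∀ t ∈ S, ∀ n : ℤ, f t ≠ n) {x y : α} (hx : x ∈ S) (hy : y ∈ S) :
    |f y - f x| < 1 := by
  by_contra! h
  have hceil : (⌈min (f x) (f y)⌉ : ℝ) ∈ uIcc (f x) (f y) := by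
    refine ⟨Int.le_ceil _, ?_⟩
    linarith [Int.ceil_lt_add_one (min (f x) (f y)), max_sub_min_eq_abs (f x) (f y)]
  obtain ⟨t, ht, hft⟩ := (hS.image f hf).ordConnected.uIcc_subset
    (mem_image_of_mem f hx) (mem_image_of_mem f hy) hceil
  exact hint t ht _ hft

theorem sin_two_pi_mul_eq_zero_iff (x : ℝ) : sin (2 * π * x) = 0 ↔ ∃ n : ℤ, 2 * x = n := by
  refine sin_eq_zero_iff.trans (exists_congr fun n => ⟨fun h => ?_, fun h => ?_⟩)
  · exact mul_right_cancel₀ pi_ne_zero (by linarith)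
  · rw [← h]; ring

theorem IsPreconnected.abs_sub_lt_half_of_sin_eq_zero_iff {α : Type*} [TopologicalSpace α]
    {S : Set α} (hS : IsPreconnected S) {f : α → ℝ} (hf : ContinuousOn f S) {x y : α}
    (hx : x ∈ S) (hy : y ∈ S) (hsin : ∀ t ∈ S, sin (2 * π * f t) = 0 ↔ sin (2 * π * f x) = 0) :
    |f y - f x| < 1 / 2 := by
  have h2f : ContinuousOn (fun t => 2 * f t) S := continuousOn_const.mul hf
  by_cases hx0 : sin (2 * π * f x) = 0
  · have : 2 * f y = 2 * f x := hS.eq_of_forall_mem_range_intCast h2f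
      (fun t ht => (sin_two_pi_mul_eq_zero_iff _).1 ((hsin t ht).2 hx0)) hx hy
    rw [show f y = f x by linarith, sub_self, abs_zero]
    norm_num
  · have := hS.abs_sub_lt_one_of_forall_ne_intCast h2f
      (fun t ht n hn => hx0 ((hsin t ht).1 ((sin_two_pi_mul_eq_zero_iff _).2 ⟨n, hn⟩))) hx hy
    rw [← mul_sub, abs_mul, abs_two] at this
    linarith

def cross (v w : Fin 2 → ℝ) : ℝ := v 0 * w 1 - v 1 * w 0

theorem cross_mulVec (A : Matrix (Fin 2) (Fin 2) ℝ) (v w : Fin 2 → ℝ) :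
    cross (A *ᵥ v) (A *ᵥ w) = A.det * cross v w := by
  simp only [cross, mulVec, dotProduct, Fin.sum_univ_two, det_fin_two]
  ring

theorem cross_smul_smul (a b : ℝ) (v w : Fin 2 → ℝ) :
    cross (a • v) (b • w) = a * b * cross v w := by
  simp only [cross, Pi.smul_apply, smul_eq_mul]
  ring

theorem rotMat_zero : rotMat 0 = 1 := by
  simp [rotMat, one_fin_two]

theorem cross_rotMat_mulVec (x y : ℝ) (s : Fin 2 → ℝ) :
    cross (rotMat x *ᵥ s) (rotMat y *ᵥ s) = (s ⬝ᵥ s) * sin (y - x) := by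
  simp only [cross, rotMat, mulVec, dotProduct, Fin.sum_univ_two, of_apply, cons_val',
    cons_val_zero, cons_val_one, empty_val', cons_val_fin_one, sin_sub]
  ring

theorem dotProduct_rotMat_mulVec (x y : ℝ) (s : Fin 2 → ℝ) :
    (rotMat x *ᵥ s) ⬝ᵥ (rotMat y *ᵥ s) = (s ⬝ᵥ s) * cos (y - x) := by
  simp only [rotMat, mulVec, dotProduct, Fin.sum_univ_two, of_apply, cons_val', cons_val_zero,
    cons_val_one, empty_val', cons_val_fin_one, cos_sub]
  ring

theorem exists_intCast_eq_sub_of_rotMat_mulVec_eq {x y : ℝ} {s : Fin 2 → ℝ} (hs : s ≠ 0)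
    (h : rotMat (2 * π * x) *ᵥ s = rotMat (2 * π * y) *ᵥ s) : ∃ n : ℤ, x - y = n := by
  have hcos := dotProduct_rotMat_mulVec (2 * π * y) (2 * π * x) s
  rw [h, dotProduct_rotMat_mulVec, sub_self, cos_zero] at hcos
  obtain ⟨n, hn⟩ := (cos_eq_one_iff _).1
    (mul_left_cancel₀ (dotProduct_self_eq_zero.not.2 hs) hcos).symm
  exact ⟨n, mul_left_cancel₀ two_pi_pos.ne' (by linarith)⟩

theorem vnorm_eq_sqrt_dotProduct (v : Fin 2 → ℝ) : vnorm v = √(v ⬝ᵥ v) := by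
  simp only [vnorm, dotProduct, Fin.sum_univ_two, sq]

theorem vnorm_pos {v : Fin 2 → ℝ} (hv : v ≠ 0) : 0 < vnorm v := by
  rw [vnorm_eq_sqrt_dotProduct, sqrt_pos]
  exact lt_of_le_of_ne (dotProduct_self_star_nonneg v) (Ne.symm (dotProduct_self_eq_zero.not.2 hv))

theorem vnorm_mulVec_pos {A : Matrix (Fin 2) (Fin 2) ℝ} (hA : A.det ≠ 0) {s : Fin 2 → ℝ}
    (hs : s ≠ 0) : 0 < vnorm (A *ᵥ s) :=
  vnorm_pos fun h => hs (eq_zero_of_mulVec_eq_zero hA h)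

/-- Polar form of the identity `cross (A v) (A (B v)) = det A * cross v (B v)`. -/
theorem mul_sin_sub_eq_det_mul_sin {A B : Matrix (Fin 2) (Fin 2) ℝ} {s : Fin 2 → ℝ} (hs : s ≠ 0)
    {a b c x y z : ℝ} (hA : A *ᵥ s = a • rotMat x *ᵥ s) (hAB : (A * B) *ᵥ s = b • rotMat y *ᵥ s)
    (hB : B *ᵥ s = c • rotMat z *ᵥ s) : a * b * sin (y - x) = A.det * (c * sin z) := by
  have h := cross_mulVec A s (B *ᵥ s)
  have hsB : cross s (B *ᵥ s) = c * ((s ⬝ᵥ s) * sin z) := by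
    have h0 := cross_smul_smul 1 c (rotMat 0 *ᵥ s) (rotMat z *ᵥ s)
    rwa [cross_rotMat_mulVec, sub_zero, rotMat_zero, one_mulVec, one_smul, one_mul, ← hB] at h0
  rw [mulVec_mulVec, hA, hAB, hsB, cross_smul_smul, cross_rotMat_mulVec] at h
  exact mul_left_cancel₀ (dotProduct_self_eq_zero.not.2 hs) (by linear_combination h)

/-- Represents the product `ΨΦ` in the universal cover of `Sp(2,ℝ)`. -/
noncomputable def concatPath (Φ Ψ : ℝ → Matrix (Fin 2) (Fin 2) ℝ) : ℝ → Matrix (Fin 2) (Fin 2) ℝ :=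
  fun t => if t ≤ 1/2 then Φ (2 * t) else Ψ (2 * t - 1) * Φ 1

theorem concatPath_half_add {Φ Ψ : ℝ → Matrix (Fin 2) (Fin 2) ℝ} (hΨ : Ψ 0 = 1) {u : ℝ}
    (hu : 0 ≤ u) : concatPath Φ Ψ ((u + 1) / 2) = Ψ u * Φ 1 := by
  rcases hu.eq_or_lt with rfl | hu
  · norm_num [concatPath, hΨ]
  · rw [concatPath, if_neg (by linarith), show 2 * ((u + 1) / 2) - 1 = u by ring]

theorem IsRotLift.concatPath_apply_half {Φ Ψ : ℝ → Matrix (Fin 2) (Fin 2) ℝ} (hΦ : IsSpPath Φ)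
    {s : Fin 2 → ℝ} (hs : s ≠ 0) {θΦ θP : ℝ → ℝ} (h1 : IsRotLift Φ s θΦ)
    (h3 : IsRotLift (concatPath Φ Ψ) s θP) : θP (1 / 2) = θΦ 1 := by
  have hmaps : MapsTo (2 * ·) (Icc (0 : ℝ) (1 / 2)) (Icc 0 1) :=
    fun t ht => ⟨by linarith [ht.1], by linarith [ht.2]⟩
  have hcont : ContinuousOn (fun t => θP t - θΦ (2 * t)) (Icc 0 (1 / 2)) :=
    (h3.1.mono (Icc_subset_Icc_right (by norm_num))).sub
      (h1.1.comp (continuousOn_const.mul continuousOn_id) hmaps)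
  have hint (t : ℝ) (ht : t ∈ Icc (0 : ℝ) (1 / 2)) : ∃ n : ℤ, θP t - θΦ (2 * t) = n := by
    have hv := vnorm_mulVec_pos (A := Φ (2 * t)) (by simp [hΦ.2.2 _ (hmaps ht)]) hs
    refine exists_intCast_eq_sub_of_rotMat_mulVec_eq hs (smul_right_injective _ hv.ne' ?_)
    have hP := h3.2.2 t ⟨ht.1, ht.2.trans (by norm_num)⟩
    rw [concatPath, if_pos ht.2] at hP
    exact hP.symm.trans (h1.2.2 _ (hmaps ht))
  have := isPreconnected_Icc.eq_of_forall_mem_range_intCast hcont hint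
    (left_mem_Icc.2 (by norm_num)) (right_mem_Icc.2 (by norm_num))
  norm_num [h1.2.1, h3.2.1] at this
  linarith

theorem IsRotLift.sin_concatPath_eq_zero_iff {Φ Ψ : ℝ → Matrix (Fin 2) (Fin 2) ℝ}
    (hΦ : IsSpPath Φ) (hΨ : IsSpPath Ψ) {s : Fin 2 → ℝ} (hs : s ≠ 0) {θΦ θΨ θP : ℝ → ℝ}
    (h1 : IsRotLift Φ s θΦ) (h2 : IsRotLift Ψ s θΨ) (h3 : IsRotLift (concatPath Φ Ψ) s θP)
    {u : ℝ} (hu : u ∈ Icc (0 : ℝ) 1) :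
    sin (2 * π * (θP ((u + 1) / 2) - θΨ u)) = 0 ↔ sin (2 * π * θΦ 1) = 0 := by
  have hΦ1 := hΦ.2.2 1 (right_mem_Icc.2 zero_le_one)
  have hΨu := hΨ.2.2 u hu
  have hP := h3.2.2 ((u + 1) / 2) ⟨by linarith [hu.1], by linarith [hu.2]⟩
  rw [concatPath_half_add hΨ.2.1 hu.1] at hP
  have key :=
    mul_sin_sub_eq_det_mul_sin hs (h2.2.2 u hu) hP (h1.2.2 1 (right_mem_Icc.2 zero_le_one))
  rw [hΨu, one_mul, ← mul_sub] at key
  have hpos := mul_pos (vnorm_mulVec_pos (A := Ψ u) (by simp [hΨu]) hs)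
    (vnorm_mulVec_pos (A := Ψ u * Φ 1) (by simp [hΨu, hΦ1]) hs)
  rw [← mul_eq_zero_iff_left hpos.ne', key,
    mul_eq_zero_iff_left (vnorm_mulVec_pos (A := Φ 1) (by simp [hΦ1]) hs).ne']

/-- `ρ_s` is a quasimorphism on the universal cover of `Sp(2,ℝ)` with defect at most `1`:
`|ρ_s(ΨΦ) − ρ_s(Ψ) − ρ_s(Φ)| ≤ 1`, where the product `ΨΦ` is represented by the
concatenation of `Φ` with the path `t ↦ Ψ(t)·Φ(1)`. -/
theorem stmt_8 (Φ Ψ : ℝ → Matrix (Fin 2) (Fin 2) ℝ)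
    (hΦ : IsSpPath Φ) (hΨ : IsSpPath Ψ)
    (s : Fin 2 → ℝ) (hs : vnorm s = 1)
    (θΦ θΨ θP : ℝ → ℝ)
    (h1 : IsRotLift Φ s θΦ)
    (h2 : IsRotLift Ψ s θΨ)
    (h3 : IsRotLift (fun t => if t ≤ 1/2 then Φ (2 * t) else Ψ (2 * t - 1) * Φ 1) s θP) :
    |θP 1 - θΨ 1 - θΦ 1| ≤ 1 := by
  have hs0 : s ≠ 0 := by
    rintro rfl
    norm_num [vnorm] at hs
  have hg : ContinuousOn (fun u => θP ((u + 1) / 2) - θΨ u) (Icc 0 1) :=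
    (h3.1.comp (by fun_prop) fun u hu => ⟨by linarith [hu.1], by linarith [hu.2]⟩).sub h2.1
  have h0 := left_mem_Icc.2 (zero_le_one' ℝ)
  have hdefect := isPreconnected_Icc.abs_sub_lt_half_of_sin_eq_zero_iff hg h0
    (right_mem_Icc.2 zero_le_one) fun u hu =>
      (h1.sin_concatPath_eq_zero_iff hΦ hΨ hs0 h2 h3 hu).trans
        (h1.sin_concatPath_eq_zero_iff hΦ hΨ hs0 h2 h3 h0).symm
  norm_num [h1.concatPath_apply_half hΦ hs0 h3, h2.2.1] at hdefect
  linarith
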